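/- arXiv:1402.1042 — 3 statements merged into one kernel-verified Lean document; each statement's English description precedes it below -/
import Mathlib

section
/- Let G be a locally compact second countable group. The set of closed subgroups H of G such that the modular function of G restricted to H equals the modular function of H (equivalently, such that G/H admits a nonzero G-invariant measure) is closed in the Chabauty topology on the space of closed subgroups of G. -/
/-!
A Haar measure of a closed subgroup `H` is recorded by the measure it induces on `G`: finite on
compact sets, carried by `H`, invariant under left translation by `H`, multiplied by `Δ x` under
right translation by `x ∈ H`, and positive on neighbourhoods of `1`.

Let `Hᵢ → H` along an ultrafilter, with such measures `νᵢ` normalised by `νᵢ N = 1` for a fixed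
compact neighbourhood `N` of `1`. Covering a compact set `K` by finitely many left translates of
a small neighbourhood of `1` bounds `νᵢ K` independently of `i`, so `K ↦ lim νᵢ K` is a content;
let `μ` be its measure, so that `μ N ≥ 1`. By the definition of the Chabauty topology, a compact
set missing `H` is eventually missed by `Hᵢ`, so `μ` is carried by `H`; and each `x ∈ H` is a
limit of points `y ∈ Hᵢ`, so translating by `y` instead of `x` shows that translation by `x`
transforms `μ` on open sets as required, using the continuity of `Δ` (which comes from
`g ↦ ∫ f (z * g) dℓ`). Outer regularity of `μ` does the rest.
-/

open MeasureTheory Topology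
open scoped ENNReal

noncomputable section

/-- The Fell (Chabauty) topology on the set of all subsets of `X`. -/
def fellTopology (X : Type*) [TopologicalSpace X] : TopologicalSpace (Set X) :=
  TopologicalSpace.generateFrom
    ({S | ∃ K : Set X, IsCompact K ∧ S = {A : Set X | A ∩ K = ∅}} ∪
     {S | ∃ U : Set X, IsOpen U ∧ S = {A : Set X | (A ∩ U).Nonempty}})

/-- The Chabauty space of closed subgroups of `G`. -/
abbrev SubG (G : Type*) [Group G] [TopologicalSpace G] : Type _ :=
  {H : Subgroup G // IsClosed (H : Set G)}

instance SubG.topologicalSpace (G : Type*) [Group G] [TopologicalSpace G] :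
    TopologicalSpace (SubG G) :=
  TopologicalSpace.induced (fun H : SubG G => ((H.1 : Subgroup G) : Set G)) (fellTopology G)

instance SubG.measurableSpace (G : Type*) [Group G] [TopologicalSpace G] :
    MeasurableSpace (SubG G) := borel _

/-- The conjugation action of `g ∈ G` on the Chabauty space of closed subgroups,
`H ↦ gHg⁻¹`. -/
def conjSubG {G : Type*} [Group G] [TopologicalSpace G] [IsTopologicalGroup G]
    (g : G) (H : SubG G) : SubG G :=
  ⟨Subgroup.map (MulAut.conj g).toMonoidHom H.1, by
    have h : ((Subgroup.map (MulAut.conj g).toMonoidHom H.1 : Subgroup G) : Set G)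
        = ((Homeomorph.mulLeft g).trans (Homeomorph.mulRight g⁻¹)) '' (H.1 : Set G) := by
      rw [Subgroup.coe_map]; rfl
    rw [h]
    exact (Homeomorph.isClosed_image _).mpr H.2⟩

open Filter Set
open scoped Pointwise

namespace SubG

variable {G : Type*} [Group G] [TopologicalSpace G]

theorem isOpen_setOf_inter_eq_empty {K : Set G} (hK : IsCompact K) :
    IsOpen {H : SubG G | (H.1 : Set G) ∩ K = ∅} :=
  isOpen_induced (t := fellTopology G)
    (TopologicalSpace.isOpen_generateFrom_of_mem (Or.inl ⟨K, hK, rfl⟩))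

theorem isOpen_setOf_inter_nonempty {U : Set G} (hU : IsOpen U) :
    IsOpen {H : SubG G | ((H.1 : Set G) ∩ U).Nonempty} :=
  isOpen_induced (t := fellTopology G)
    (TopologicalSpace.isOpen_generateFrom_of_mem (Or.inr ⟨U, hU, rfl⟩))

end SubG

theorem ENNReal.ne_top_of_mul_eq_one {a b : ℝ≥0∞} (h : a * b = 1) : a ≠ ∞ :=
  ENNReal.eq_inv_of_mul_eq_one_left h ▸ ENNReal.inv_ne_top.2 (right_ne_zero_of_mul_eq_one h)

section ModularFunction

variable {G : Type*} [Group G] [TopologicalSpace G] [IsTopologicalGroup G] [LocallyCompactSpace G]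
  [MeasurableSpace G] [BorelSpace G] (ℓ : Measure G) [ℓ.IsHaarMeasure] {Δ : G → ℝ≥0∞}

theorem mul_apply_inv_eq_one_of_map_mul_right_eq_smul
    (hΔ : ∀ g, Measure.map (· * g) ℓ = Δ g • ℓ) (g : G) : Δ g * Δ g⁻¹ = 1 := by
  obtain ⟨K, hK, hK1⟩ := exists_compact_mem_nhds (1 : G)
  have hcomp : Measure.map (· * g⁻¹) (Measure.map (· * g) ℓ) = ℓ := by
    rw [Measure.map_map (measurable_mul_const _) (measurable_mul_const _)]
    simp [Function.comp_def]
  rw [hΔ, Measure.map_smul, hΔ, smul_smul] at hcomp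
  have hK' := congrArg (· K) hcomp
  simp only [Measure.smul_apply, smul_eq_mul] at hK'
  rwa [ENNReal.mul_eq_right (Measure.measure_pos_of_mem_nhds ℓ hK1).ne' hK.measure_lt_top.ne] at hK'

theorem continuous_of_map_mul_right_eq_smul
    (hΔ : ∀ g, Measure.map (· * g) ℓ = Δ g • ℓ) : Continuous Δ := by
  obtain ⟨f, hfc, hf0, hf1⟩ := exists_continuous_nonneg_pos (1 : G)
  have hpos : 0 < ∫ z, f z ∂ℓ :=
    f.continuous.integral_pos_of_hasCompactSupport_nonneg_nonzero hfc hf0 hf1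
  have hint (g : G) : ∫ z, f (z * g) ∂ℓ = (Δ g).toReal * ∫ z, f z ∂ℓ := by
    rw [← integral_map (measurable_mul_const g).aemeasurable f.continuous.aestronglyMeasurable,
      hΔ, integral_smul_measure, smul_eq_mul]
  have hcont : Continuous fun g => ∫ z, f (z * g) ∂ℓ := by
    refine (continuous_integral_apply_inv_mul (μ := ℓ.inv) f.continuous hfc).congr fun g => ?_
    exact ((MeasurableEquiv.inv G).measurableEmbedding.integral_map _).trans (by simp)
  have hreal : Continuous fun g => (Δ g).toReal := by
    simpa [hint, mul_div_cancel_right₀ _ hpos.ne'] using hcont.div_const (∫ z, f z ∂ℓ)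
  have hfin (g : G) : Δ g ≠ ∞ :=
    ENNReal.ne_top_of_mul_eq_one (mul_apply_inv_eq_one_of_map_mul_right_eq_smul ℓ hΔ g)
  convert ENNReal.continuous_ofReal.comp hreal using 1
  funext g
  simp [ENNReal.ofReal_toReal (hfin g)]

end ModularFunction

section HaarOnSubgroup

variable {G : Type*} [Group G] [TopologicalSpace G] [MeasurableSpace G] {Δ : G → ℝ≥0∞}
  {J : Subgroup G} {ν : Measure G}

structure IsHaarOnSubgroup (Δ : G → ℝ≥0∞) (J : Subgroup G) (ν : Measure G) : Prop where
  measure_compl : ν (J : Set G)ᶜ = 0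
  isFiniteMeasureOnCompacts : IsFiniteMeasureOnCompacts ν
  map_mul_left : ∀ x ∈ J, ν.map (x * ·) = ν
  map_mul_right : ∀ x ∈ J, ν.map (· * x) = Δ x • ν
  measure_ne_zero : ∀ V ∈ 𝓝 (1 : G), ν V ≠ 0

namespace IsHaarOnSubgroup

theorem smul (h : IsHaarOnSubgroup Δ J ν) {c : ℝ≥0∞} (hc₀ : c ≠ 0) (hc : c ≠ ∞) :
    IsHaarOnSubgroup Δ J (c • ν) where
  measure_compl := by simp [h.measure_compl]
  isFiniteMeasureOnCompacts := by
    have := h.isFiniteMeasureOnCompacts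
    exact .smul ν hc
  map_mul_left x hx := by rw [Measure.map_smul, h.map_mul_left x hx]
  map_mul_right x hx := by rw [Measure.map_smul, h.map_mul_right x hx, smul_comm]
  measure_ne_zero V hV := by simp [hc₀, h.measure_ne_zero V hV]

theorem exists_measure_eq_one (h : IsHaarOnSubgroup Δ J ν) {N : Set G} (hN : N ∈ 𝓝 (1 : G))
    (hNc : IsCompact N) : ∃ ν' : Measure G, IsHaarOnSubgroup Δ J ν' ∧ ν' N = 1 := by
  have := h.isFiniteMeasureOnCompacts
  have h₀ := h.measure_ne_zero N hN
  have htop := (hNc.measure_lt_top (μ := ν)).ne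
  exact ⟨(ν N)⁻¹ • ν, h.smul (ENNReal.inv_ne_zero.2 htop) (ENNReal.inv_ne_top.2 h₀),
    by simp [ENNReal.inv_mul_cancel h₀ htop]⟩

end IsHaarOnSubgroup

variable [IsTopologicalGroup G] [BorelSpace G]

theorem exists_measure_le_mul_of_mem_nhds_one {K V : Set G} (hK : IsCompact K)
    (hV : V ∈ 𝓝 (1 : G)) :
    ∃ n : ℕ, ∀ (J : Subgroup G) (ν : Measure G), ν (J : Set G)ᶜ = 0 →
      (∀ x ∈ J, ν.map (x * ·) = ν) → ν K ≤ n * ν V := by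
  obtain ⟨W, hW1, -, hWinv, hWW⟩ := exists_closed_nhds_one_inv_eq_mul_subset hV
  obtain ⟨t, hKt⟩ :=
    compact_covered_by_mul_left_translates hK ⟨1, mem_interior_iff_mem_nhds.2 hW1⟩
  refine ⟨t.card, fun J ν hJ hinv => ?_⟩
  have hpiece (g : G) : ν ((g * ·) ⁻¹' W) ≤ ν V := by
    rcases ((g * ·) ⁻¹' W ∩ J).eq_empty_or_nonempty with h | ⟨z, hzW, hzJ⟩
    · exact (measure_mono_null (fun u hu huJ => h.subset ⟨hu, huJ⟩) hJ).trans_le zero_le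
    -- every point of `g⁻¹ W` lies in `z (W⁻¹ W) ⊆ z V`
    have hsub : (g * ·) ⁻¹' W ⊆ (z⁻¹ * ·) ⁻¹' V := fun u hu =>
      hWW ⟨(g * z)⁻¹, hWinv ▸ Set.inv_mem_inv.2 hzW, g * u, hu, by group⟩
    calc ν ((g * ·) ⁻¹' W) ≤ ν ((z⁻¹ * ·) ⁻¹' V) := measure_mono hsub
      _ ≤ ν.map (z⁻¹ * ·) V := Measure.le_map_apply (measurable_const_mul _).aemeasurable V
      _ = ν V := by rw [hinv _ (inv_mem hzJ)]
  calc ν K ≤ ν (⋃ g ∈ t, (g * ·) ⁻¹' W) := measure_mono hKt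
    _ ≤ ∑ g ∈ t, ν ((g * ·) ⁻¹' W) := measure_biUnion_finset_le t _
    _ ≤ ∑ _g ∈ t, ν V := Finset.sum_le_sum fun g _ => hpiece g
    _ = t.card * ν V := by rw [Finset.sum_const, nsmul_eq_mul]

namespace IsHaarOnSubgroup

theorem measure_le_of_subset_preimage_mul_left (h : IsHaarOnSubgroup Δ J ν) {y : G} (hy : y ∈ J)
    {K L : Set G} (hKL : K ⊆ (y * ·) ⁻¹' L) : ν K ≤ ν L :=
  (measure_mono hKL).trans <|
    (Measure.le_map_apply (measurable_const_mul y).aemeasurable L).trans_eq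
      (by rw [h.map_mul_left y hy])

theorem measure_le_of_subset_preimage_mul_right (h : IsHaarOnSubgroup Δ J ν) {y : G} (hy : y ∈ J)
    {K L : Set G} (hKL : K ⊆ (· * y) ⁻¹' L) : ν K ≤ Δ y * ν L :=
  (measure_mono hKL).trans <|
    (Measure.le_map_apply (measurable_mul_const y).aemeasurable L).trans_eq
      (by rw [h.map_mul_right y hy, Measure.smul_apply, smul_eq_mul])

end IsHaarOnSubgroup

theorem map_subtypeVal_map_mul_left (μ : Measure J) (x : J) :
    (μ.map (x * ·)).map Subtype.val = (μ.map Subtype.val).map ((x : G) * ·) := by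
  have hmul : Measurable fun z : J => x * z :=
    ((measurable_const_mul (x : G)).comp measurable_subtype_coe).subtype_mk
  rw [Measure.map_map measurable_subtype_coe hmul,
    Measure.map_map (measurable_const_mul _) measurable_subtype_coe]
  rfl

theorem map_subtypeVal_map_mul_right (μ : Measure J) (x : J) :
    (μ.map (· * x)).map Subtype.val = (μ.map Subtype.val).map (· * (x : G)) := by
  have hmul : Measurable fun z : J => z * x :=
    ((measurable_mul_const (x : G)).comp measurable_subtype_coe).subtype_mk
  rw [Measure.map_map measurable_subtype_coe hmul,
    Measure.map_map (measurable_mul_const _) measurable_subtype_coe]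
  rfl

theorem isHaarOnSubgroup_map_subtypeVal (hJ : IsClosed (J : Set G)) (μ : Measure J)
    [μ.IsHaarMeasure] (hμ : ∀ x : J, μ.map (· * x) = Δ x • μ) :
    IsHaarOnSubgroup Δ J (μ.map Subtype.val) := by
  have e : MeasurableEmbedding (Subtype.val : J → G) :=
    MeasurableEmbedding.subtype_coe hJ.measurableSet
  refine ⟨?_, ⟨fun K hK => ?_⟩, fun x hx => ?_, fun x hx => ?_, fun V hV => ?_⟩
  · rw [e.map_apply, Set.preimage_compl, Subtype.coe_preimage_self, Set.compl_univ, measure_empty]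
  · rw [e.map_apply]
    exact (hJ.isClosedEmbedding_subtypeVal.isCompact_preimage hK).measure_lt_top
  · rw [← map_subtypeVal_map_mul_left μ ⟨x, hx⟩, map_mul_left_eq_self]
  · rw [← map_subtypeVal_map_mul_right μ ⟨x, hx⟩, hμ, Measure.map_smul]
  · rw [e.map_apply]
    exact (Measure.measure_pos_of_mem_nhds μ
      (continuous_subtype_val.continuousAt.preimage_mem_nhds (x := (1 : J)) hV)).ne'

theorem IsHaarOnSubgroup.exists_isHaarMeasure [LocallyCompactSpace G] (hJ : IsClosed (J : Set G))
    (h : IsHaarOnSubgroup Δ J ν) :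
    ∃ μ : Measure J, μ.IsHaarMeasure ∧ ∀ x : J, μ.map (· * x) = Δ x • μ := by
  have e : MeasurableEmbedding (Subtype.val : J → G) :=
    MeasurableEmbedding.subtype_coe hJ.measurableSet
  set μ := ν.comap (Subtype.val : J → G)
  have hmap : μ.map Subtype.val = ν := by
    rw [e.map_comap, Subtype.range_coe]
    exact Measure.restrict_eq_self_of_ae_mem h.measure_compl
  have hinj {μ₁ μ₂ : Measure J} (h₁₂ : μ₁.map Subtype.val = μ₂.map Subtype.val) : μ₁ = μ₂ := by
    rw [← e.comap_map μ₁, h₁₂, e.comap_map]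
  have := h.isFiniteMeasureOnCompacts
  have : IsFiniteMeasureOnCompacts μ := .comap' ν continuous_subtype_val e
  have : μ.IsMulLeftInvariant :=
    ⟨fun x => hinj (by rw [map_subtypeVal_map_mul_left, hmap, h.map_mul_left x x.2])⟩
  obtain ⟨N, hNc, hN⟩ := exists_compact_mem_nhds (1 : G)
  have : μ.IsOpenPosMeasure := isOpenPosMeasure_of_mulLeftInvariant_of_compact _
    (hJ.isClosedEmbedding_subtypeVal.isCompact_preimage hNc) (by
      rw [e.comap_apply, Subtype.image_preimage_coe, Set.inter_comm,
        measure_inter_conull h.measure_compl]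
      exact h.measure_ne_zero N hN)
  refine ⟨μ, ⟨⟩, fun x => hinj ?_⟩
  rw [map_subtypeVal_map_mul_right, hmap, h.map_mul_right x x.2, Measure.map_smul, hmap]

theorem exists_isHaarMeasure_iff_exists_isHaarOnSubgroup [LocallyCompactSpace G]
    (hJ : IsClosed (J : Set G)) :
    (∃ μ : Measure J, μ.IsHaarMeasure ∧ ∀ x : J, μ.map (· * x) = Δ x • μ) ↔
      ∃ ν : Measure G, IsHaarOnSubgroup Δ J ν :=
  ⟨fun ⟨μ, _, hμ⟩ => ⟨_, isHaarOnSubgroup_map_subtypeVal hJ μ hμ⟩,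
    fun ⟨_, h⟩ => h.exists_isHaarMeasure hJ⟩

end HaarOnSubgroup

section UltrafilterLimit

variable {ι : Type*} (𝒰 : Ultrafilter ι)

theorem Ultrafilter.tendsto_limUnder {X : Type*} [TopologicalSpace X] [CompactSpace X] [Nonempty X]
    (f : ι → X) : Tendsto f 𝒰 (𝓝 (limUnder (𝒰 : Filter ι) f)) :=
  tendsto_nhds_limUnder ⟨_, (𝒰.map f).le_nhds_lim⟩

variable {G : Type*} [MeasurableSpace G] (ν : ι → Measure G)

variable {𝒰 ν} in
theorem limUnder_measure_ne_top {K : Set G} (hK : ∃ C, C ≠ ∞ ∧ ∀ᶠ i in 𝒰, ν i K ≤ C) :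
    limUnder (𝒰 : Filter ι) (fun i => ν i K) ≠ ∞ :=
  let ⟨_, hC, hle⟩ := hK
  ne_top_of_le_ne_top hC (le_of_tendsto (𝒰.tendsto_limUnder _) hle)

variable [TopologicalSpace G] [OpensMeasurableSpace G]

def ultrafilterLimitContent
    (hν : ∀ K : Set G, IsCompact K → ∃ C, C ≠ ∞ ∧ ∀ᶠ i in 𝒰, ν i K ≤ C) : Content G where
  toFun K := (limUnder (𝒰 : Filter ι) fun i => ν i K).toNNReal
  mono' K₁ K₂ h := ENNReal.toNNReal_mono (limUnder_measure_ne_top (hν _ K₂.isCompact))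
    (le_of_tendsto_of_tendsto' (𝒰.tendsto_limUnder _) (𝒰.tendsto_limUnder _)
      fun _ => measure_mono h)
  sup_disjoint' K₁ K₂ hdisj _ hK₂ := by
    have hadd := tendsto_nhds_unique (𝒰.tendsto_limUnder fun i => ν i ↑(K₁ ⊔ K₂))
      (((𝒰.tendsto_limUnder fun i => ν i K₁).add (𝒰.tendsto_limUnder fun i => ν i K₂)).congr
        fun i => (measure_union hdisj hK₂.measurableSet).symm)
    rw [hadd, ENNReal.toNNReal_add (limUnder_measure_ne_top (hν _ K₁.isCompact))
      (limUnder_measure_ne_top (hν _ K₂.isCompact))]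
  sup_le' K₁ K₂ := by
    rw [← ENNReal.toNNReal_add (limUnder_measure_ne_top (hν _ K₁.isCompact))
      (limUnder_measure_ne_top (hν _ K₂.isCompact))]
    exact ENNReal.toNNReal_mono (ENNReal.add_ne_top.2 ⟨limUnder_measure_ne_top (hν _ K₁.isCompact),
      limUnder_measure_ne_top (hν _ K₂.isCompact)⟩)
      (le_of_tendsto_of_tendsto' (𝒰.tendsto_limUnder _)
        ((𝒰.tendsto_limUnder _).add (𝒰.tendsto_limUnder _)) fun _ => measure_union_le _ _)

theorem tendsto_ultrafilterLimitContent
    (hν : ∀ K : Set G, IsCompact K → ∃ C, C ≠ ∞ ∧ ∀ᶠ i in 𝒰, ν i K ≤ C)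
    (K : TopologicalSpace.Compacts G) :
    Tendsto (fun i => ν i K) 𝒰 (𝓝 (ultrafilterLimitContent 𝒰 ν hν K)) := by
  rw [ultrafilterLimitContent, Content.mk_apply,
    ENNReal.coe_toNNReal (limUnder_measure_ne_top (hν _ K.isCompact))]
  exact 𝒰.tendsto_limUnder _

end UltrafilterLimit

section ChabautyLimit

variable {G : Type*} [Group G] [TopologicalSpace G] [IsTopologicalGroup G]
  [MeasurableSpace G] [BorelSpace G] {Δ : G → ℝ≥0∞} {H : SubG G} {𝒰 : Ultrafilter (SubG G)}
  {ν : SubG G → Measure G}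
  {hbdd : ∀ K : Set G, IsCompact K → ∃ C, C ≠ ∞ ∧ ∀ᶠ J in (𝒰 : Filter (SubG G)), ν J K ≤ C}

theorem exists_eventually_measure_le_of_measure_eq_one {F : Filter (SubG G)} {N : Set G}
    (hN : N ∈ 𝓝 (1 : G)) (hν : ∀ᶠ J in F, IsHaarOnSubgroup Δ J.1 (ν J) ∧ ν J N = 1)
    (K : Set G) (hK : IsCompact K) : ∃ C, C ≠ ∞ ∧ ∀ᶠ J in F, ν J K ≤ C :=
  let ⟨n, hn⟩ := exists_measure_le_mul_of_mem_nhds_one hK hN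
  ⟨n, ENNReal.natCast_ne_top n, hν.mono fun J ⟨hJ, h1⟩ =>
    (hn J.1 (ν J) hJ.measure_compl hJ.map_mul_left).trans_eq (by rw [h1, mul_one])⟩

theorem ultrafilterLimitContent_measure_compl (h𝒰 : ↑𝒰 ≤ 𝓝 H)
    (hν : ∀ᶠ J in (𝒰 : Filter (SubG G)), IsHaarOnSubgroup Δ J.1 (ν J)) :
    (ultrafilterLimitContent 𝒰 ν hbdd).measure (H.1 : Set G)ᶜ = 0 := by
  set κ := ultrafilterLimitContent 𝒰 ν hbdd
  have hH := H.2.isOpen_compl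
  rw [κ.measure_apply hH.measurableSet, κ.outerMeasure_of_isOpen _ hH]
  refine le_antisymm (iSup₂_le fun K hK => ?_) zero_le
  have hHK : (H.1 : Set G) ∩ K = ∅ := (Set.subset_compl_iff_disjoint_left.1 hK).inter_eq
  refine le_of_tendsto (tendsto_ultrafilterLimitContent 𝒰 ν hbdd K) ?_
  filter_upwards [h𝒰 ((SubG.isOpen_setOf_inter_eq_empty K.isCompact).mem_nhds hHK), hν]
    with J hJK hJ
  exact (measure_mono_null (fun k hk hkJ => hJK.subset ⟨hkJ, hk⟩) hJ.measure_compl).le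

variable [LocallyCompactSpace G]

theorem ultrafilterLimitContent_measure_preimage_mul_left_le (h𝒰 : ↑𝒰 ≤ 𝓝 H)
    (hν : ∀ᶠ J in (𝒰 : Filter (SubG G)), IsHaarOnSubgroup Δ J.1 (ν J)) {x : G} (hx : x ∈ H.1)
    {W : Set G} (hW : IsOpen W) :
    (ultrafilterLimitContent 𝒰 ν hbdd).measure ((x * ·) ⁻¹' W) ≤
      (ultrafilterLimitContent 𝒰 ν hbdd).measure W := by
  set κ := ultrafilterLimitContent 𝒰 ν hbdd
  have hW' := hW.preimage (continuous_const_mul x)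
  rw [κ.measure_apply hW'.measurableSet, κ.outerMeasure_of_isOpen _ hW',
    κ.measure_apply hW.measurableSet, κ.outerMeasure_of_isOpen _ hW]
  refine iSup₂_le fun K hK => ?_
  have hxK := K.isCompact.image (continuous_const_mul x)
  obtain ⟨L, hLc, hKL, hLW⟩ := exists_compact_between hxK hW (image_subset_iff.2 hK)
  obtain ⟨V, hV, hVK⟩ := compact_open_separated_mul_left hxK isOpen_interior hKL
  -- every `y ∈ J` with `y x⁻¹ ∈ V` translates `K` into `L`
  have hev : ∀ᶠ J in (𝒰 : Filter (SubG G)), ν J K ≤ ν J L := by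
    have hO : IsOpen ((· * x⁻¹) ⁻¹' interior V) :=
      isOpen_interior.preimage (continuous_mul_const _)
    filter_upwards [h𝒰 ((SubG.isOpen_setOf_inter_nonempty hO).mem_nhds
      ⟨x, hx, by simpa using mem_interior_iff_mem_nhds.2 hV⟩), hν] with J ⟨y, hyJ, hyV⟩ hJ
    exact hJ.measure_le_of_subset_preimage_mul_left hyJ fun k hk => show y * k ∈ L from
      interior_subset (hVK ⟨y * x⁻¹, interior_subset hyV, x * k, ⟨k, hk, rfl⟩, by group⟩)
  calc κ K ≤ κ ⟨L, hLc⟩ := le_of_tendsto_of_tendsto (tendsto_ultrafilterLimitContent 𝒰 ν hbdd K)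
        (tendsto_ultrafilterLimitContent 𝒰 ν hbdd ⟨L, hLc⟩) hev
    _ ≤ κ.innerContent ⟨W, hW⟩ := κ.le_innerContent _ _ hLW

theorem ultrafilterLimitContent_measure_preimage_mul_right_le (hΔc : Continuous Δ)
    (h𝒰 : ↑𝒰 ≤ 𝓝 H) (hν : ∀ᶠ J in (𝒰 : Filter (SubG G)), IsHaarOnSubgroup Δ J.1 (ν J))
    {x : G} (hx : x ∈ H.1) {W : Set G} (hW : IsOpen W) {r : ℝ≥0∞} (hr : Δ x < r)
    (hr' : r ≠ ∞) :
    (ultrafilterLimitContent 𝒰 ν hbdd).measure ((· * x) ⁻¹' W) ≤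
      r * (ultrafilterLimitContent 𝒰 ν hbdd).measure W := by
  set κ := ultrafilterLimitContent 𝒰 ν hbdd
  have hW' := hW.preimage (continuous_mul_const x)
  rw [κ.measure_apply hW'.measurableSet, κ.outerMeasure_of_isOpen _ hW',
    κ.measure_apply hW.measurableSet, κ.outerMeasure_of_isOpen _ hW]
  refine iSup₂_le fun K hK => ?_
  have hKx := K.isCompact.image (continuous_mul_const x)
  obtain ⟨L, hLc, hKL, hLW⟩ := exists_compact_between hKx hW (image_subset_iff.2 hK)
  obtain ⟨V, hV, hVK⟩ := compact_open_separated_mul_right hKx isOpen_interior hKL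
  -- every `y ∈ J` with `x⁻¹ y ∈ V` and `Δ y < r` translates `K` into `L`
  have hev : ∀ᶠ J in (𝒰 : Filter (SubG G)), ν J K ≤ r * ν J L := by
    have hO : IsOpen ((x⁻¹ * ·) ⁻¹' interior V ∩ {y | Δ y < r}) :=
      (isOpen_interior.preimage (continuous_const_mul _)).inter (isOpen_lt hΔc continuous_const)
    filter_upwards [h𝒰 ((SubG.isOpen_setOf_inter_nonempty hO).mem_nhds
      ⟨x, hx, by simpa using mem_interior_iff_mem_nhds.2 hV, hr⟩), hν]
      with J ⟨y, hyJ, hyV, hyr⟩ hJ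
    calc ν J K ≤ Δ y * ν J L := hJ.measure_le_of_subset_preimage_mul_right hyJ fun k hk =>
          show k * y ∈ L from interior_subset
            (hVK ⟨k * x, ⟨k, hk, rfl⟩, x⁻¹ * y, interior_subset hyV, by group⟩)
      _ ≤ r * ν J L := mul_le_mul_left hyr.le _
  calc κ K ≤ r * κ ⟨L, hLc⟩ := le_of_tendsto_of_tendsto
        (tendsto_ultrafilterLimitContent 𝒰 ν hbdd K)
        (ENNReal.Tendsto.const_mul (tendsto_ultrafilterLimitContent 𝒰 ν hbdd ⟨L, hLc⟩)
          (Or.inr hr')) hev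
    _ ≤ r * κ.innerContent ⟨W, hW⟩ := mul_le_mul_right (κ.le_innerContent _ _ hLW) _

theorem map_mul_left_ultrafilterLimitContent_measure (h𝒰 : ↑𝒰 ≤ 𝓝 H)
    (hν : ∀ᶠ J in (𝒰 : Filter (SubG G)), IsHaarOnSubgroup Δ J.1 (ν J)) {x : G} (hx : x ∈ H.1) :
    (ultrafilterLimitContent 𝒰 ν hbdd).measure.map (x * ·) =
      (ultrafilterLimitContent 𝒰 ν hbdd).measure := by
  set μ := (ultrafilterLimitContent 𝒰 ν hbdd).measure
  have : (μ.map (x * ·)).OuterRegular := Measure.OuterRegular.map (Homeomorph.mulLeft x) μ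
  refine Measure.OuterRegular.ext_isOpen fun W hW => ?_
  rw [Measure.map_apply (measurable_const_mul x) hW.measurableSet]
  refine le_antisymm (ultrafilterLimitContent_measure_preimage_mul_left_le h𝒰 hν hx hW) ?_
  simpa [Set.preimage_preimage] using ultrafilterLimitContent_measure_preimage_mul_left_le h𝒰 hν
    (inv_mem hx) (hW.preimage (continuous_const_mul x))

theorem map_mul_right_ultrafilterLimitContent_measure (hΔ : ∀ g, Δ g * Δ g⁻¹ = 1)
    (hΔc : Continuous Δ) (h𝒰 : ↑𝒰 ≤ 𝓝 H)
    (hν : ∀ᶠ J in (𝒰 : Filter (SubG G)), IsHaarOnSubgroup Δ J.1 (ν J)) {x : G} (hx : x ∈ H.1) :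
    (ultrafilterLimitContent 𝒰 ν hbdd).measure.map (· * x) =
      Δ x • (ultrafilterLimitContent 𝒰 ν hbdd).measure := by
  set μ := (ultrafilterLimitContent 𝒰 ν hbdd).measure
  have hle (y : G) (hy : y ∈ H.1) (W : Set G) (hW : IsOpen W) :
      μ ((· * y) ⁻¹' W) ≤ Δ y * μ W := by
    refine ENNReal.le_mul_of_forall_lt (Or.inl (left_ne_zero_of_mul_eq_one (hΔ y)))
      (Or.inl (ENNReal.ne_top_of_mul_eq_one (hΔ y))) fun r hr b hb => ?_
    rcases eq_or_ne r ∞ with rfl | hr'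
    · simp [ENNReal.top_mul (pos_of_gt hb).ne']
    · exact (ultrafilterLimitContent_measure_preimage_mul_right_le hΔc h𝒰 hν hy hW hr hr').trans
        (mul_le_mul_right hb.le r)
  have : (μ.map (· * x)).OuterRegular := Measure.OuterRegular.map (Homeomorph.mulRight x) μ
  have : (Δ x • μ).OuterRegular :=
    Measure.OuterRegular.smul μ (ENNReal.ne_top_of_mul_eq_one (hΔ x))
  refine Measure.OuterRegular.ext_isOpen fun W hW => ?_
  rw [Measure.map_apply (measurable_mul_const x) hW.measurableSet, Measure.smul_apply,
    smul_eq_mul]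
  refine le_antisymm (hle x hx W hW) ?_
  calc Δ x * μ W ≤ Δ x * (Δ x⁻¹ * μ ((· * x) ⁻¹' W)) := by
        gcongr
        simpa [Set.preimage_preimage] using
          hle x⁻¹ (inv_mem hx) _ (hW.preimage (continuous_mul_const x))
    _ = μ ((· * x) ⁻¹' W) := by rw [← mul_assoc, hΔ, one_mul]

theorem isHaarOnSubgroup_ultrafilterLimitContent_measure (hΔ : ∀ g, Δ g * Δ g⁻¹ = 1)
    (hΔc : Continuous Δ) (h𝒰 : ↑𝒰 ≤ 𝓝 H)
    (hν : ∀ᶠ J in (𝒰 : Filter (SubG G)), IsHaarOnSubgroup Δ J.1 (ν J)) {N : Set G}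
    (hNc : IsCompact N)
    (hN₁ : ∀ᶠ J in (𝒰 : Filter (SubG G)), ν J N = 1) :
    IsHaarOnSubgroup Δ H.1 (ultrafilterLimitContent 𝒰 ν hbdd).measure := by
  set κ := ultrafilterLimitContent 𝒰 ν hbdd
  have hcompl := ultrafilterLimitContent_measure_compl h𝒰 hν (hbdd := hbdd)
  have hleft (x : G) (hx : x ∈ H.1) := map_mul_left_ultrafilterLimitContent_measure h𝒰 hν hx
    (hbdd := hbdd)
  refine ⟨hcompl, inferInstance, hleft, fun x hx =>
    map_mul_right_ultrafilterLimitContent_measure hΔ hΔc h𝒰 hν hx, fun V hV h₀ => ?_⟩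
  have hκN : κ ⟨N, hNc⟩ = 1 := tendsto_nhds_unique (tendsto_ultrafilterLimitContent 𝒰 ν hbdd _)
    (tendsto_const_nhds.congr' (hN₁.mono fun _ h => h.symm))
  have hN : 1 ≤ κ.measure N := hκN ▸ (κ.le_outerMeasure_compacts ⟨N, hNc⟩).trans
    (le_toMeasure_apply _ κ.borel_le_caratheodory N)
  obtain ⟨n, hn⟩ := exists_measure_le_mul_of_mem_nhds_one hNc hV
  have h₁ := hN.trans (hn H.1 κ.measure hcompl hleft)
  rw [h₀, mul_zero] at h₁
  exact one_ne_zero (nonpos_iff_eq_zero.1 h₁)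

theorem isClosed_setOf_exists_isHaarOnSubgroup (hΔ : ∀ g, Δ g * Δ g⁻¹ = 1)
    (hΔc : Continuous Δ) : IsClosed {H : SubG G | ∃ ν : Measure G, IsHaarOnSubgroup Δ H.1 ν} := by
  refine isClosed_iff_ultrafilter.2 fun H 𝒰 h𝒰 hS => ?_
  obtain ⟨N, hNc, hN⟩ := exists_compact_mem_nhds (1 : G)
  choose! ν hν using fun (J : SubG G) (hJ : ∃ ν, IsHaarOnSubgroup Δ J.1 ν) =>
    hJ.choose_spec.exists_measure_eq_one hN hNc
  have hev : ∀ᶠ J in (𝒰 : Filter (SubG G)), IsHaarOnSubgroup Δ J.1 (ν J) ∧ ν J N = 1 :=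
    Filter.mem_of_superset hS hν
  exact ⟨_, isHaarOnSubgroup_ultrafilterLimitContent_measure
    (hbdd := exists_eventually_measure_le_of_measure_eq_one hN hev) hΔ hΔc h𝒰
    (hev.mono fun _ h => h.1) hNc (hev.mono fun _ h => h.2)⟩

end ChabautyLimit

theorem isClosed_subgroups_with_matching_modular_function_general
    {G : Type*} [Group G] [TopologicalSpace G] [IsTopologicalGroup G]
    [LocallyCompactSpace G]
    [MeasurableSpace G] [BorelSpace G]
    (ℓ : Measure G) [ℓ.IsHaarMeasure]
    (ΔG : G → ℝ≥0∞) (hΔG : ∀ g : G, Measure.map (fun x => x * g) ℓ = ΔG g • ℓ) :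
    IsClosed {H : SubG G | ∃ μ : Measure ↥H.1, μ.IsHaarMeasure ∧
      ∀ h : ↥H.1, Measure.map (fun x => x * h) μ = ΔG (h : G) • μ} := by
  convert isClosed_setOf_exists_isHaarOnSubgroup
    (mul_apply_inv_eq_one_of_map_mul_right_eq_smul ℓ hΔG)
    (continuous_of_map_mul_right_eq_smul ℓ hΔG) using 1
  ext H
  exact exists_isHaarMeasure_iff_exists_isHaarOnSubgroup H.2

/-- **Closedness of the set of subgroups with invariant quotient measure.**
Let `G` be a locally compact second countable group with left Haar measure `ℓ` and modular
function `Δ_G` (characterized by `(·* g)_* ℓ = Δ_G(g) • ℓ`).  The set of closed subgroups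
`H` of `G` such that `Δ_G` restricted to `H` is the modular function of `H` (i.e. some left
Haar measure of `H` has modular function `Δ_G|_H`; equivalently `G/H` carries a nonzero
`G`-invariant measure) is closed in the Chabauty topology. -/
theorem isClosed_subgroups_with_matching_modular_function
    {G : Type*} [Group G] [TopologicalSpace G] [IsTopologicalGroup G]
    [LocallyCompactSpace G] [SecondCountableTopology G]
    [MeasurableSpace G] [BorelSpace G]
    (ℓ : Measure G) [ℓ.IsHaarMeasure]
    (ΔG : G → ℝ≥0∞) (hΔG : ∀ g : G, Measure.map (fun x => x * g) ℓ = ΔG g • ℓ) :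
    IsClosed {H : SubG G | ∃ μ : Measure ↥H.1, μ.IsHaarMeasure ∧
      ∀ h : ↥H.1, Measure.map (fun x => x * h) μ = ΔG (h : G) • μ} :=
  isClosed_subgroups_with_matching_modular_function_general ℓ ΔG hΔG
end
end

section
/- Let G be a locally compact second countable group acting measurably on a standard Borel space X. Then for every x ∈ X the stabilizer G_x = {g ∈ G : gx = x} is a closed subgroup of G, and the map x ↦ G_x from X to the Chabauty space of closed subgroups of G is Borel measurable. -/
/-!
Fix a bounded injective Borel map `q : X → ℝ`, a right Haar measure `ν` and a compact
neighbourhood `C` of `1`, and put `φ(x, k) = ∫_C |q(hk • x) - q(h • x)| dν(h)`. Then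
`φ(x, k) = 0` exactly when `k • x = x`, `φ` is Borel in `x`, and continuity of right translation
in `L¹` makes `φ` continuous in `k`. Hence `G_x` is the zero set of a continuous function, and
whether `G_x` meets a compact set `K` is decided by the infimum of `φ(x, ·)` over a countable dense
subset of `K`, a Borel function of `x`. These events generate the Borel structure of the Chabauty
space: it is second countable, its subbasic sets are `{A ∩ K = ∅}` and `{A ∩ U ≠ ∅}`, and every
open `U` is a countable union of compact sets.
-/

open MeasureTheory Topology
open scoped ENNReal

noncomputable section

open Filter Set TopologicalSpace
open scoped Pointwise

section FellTopology

variable {X : Type*} [TopologicalSpace X] [LocallyCompactSpace X] [RegularSpace X]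
  [SecondCountableTopology X]

theorem exists_countable_isCompact_between :
    ∃ 𝒦 : Set (Set X), 𝒦.Countable ∧ (∀ L ∈ 𝒦, IsCompact L) ∧
      ∀ ⦃K U : Set X⦄, IsCompact K → IsOpen U → K ⊆ U → ∃ L ∈ 𝒦, K ⊆ L ∧ L ⊆ U := by
  set B := {V ∈ countableBasis X | IsCompact (closure V)}
  refine ⟨(fun T => ⋃ V ∈ T, closure V) '' {T | T.Finite ∧ T ⊆ B},
    (countable_ofPred_finite_subset ((countable_countableBasis X).mono (sep_subset _ _))).image _,
    ?_, ?_⟩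
  · rintro _ ⟨T, ⟨hTf, hTB⟩, rfl⟩
    exact hTf.isCompact_biUnion fun V hV => (hTB hV).2
  · intro K U hK hU hKU
    have hcover : K ⊆ ⋃ V ∈ {V ∈ B | closure V ⊆ U}, V := by
      intro g hg
      obtain ⟨L, hLc, hLcl, hgL, hLU⟩ :=
        exists_compact_closed_between isCompact_singleton hU (singleton_subset_iff.2 (hKU hg))
      obtain ⟨V, hVB, hgV, hVL⟩ :=
        (isBasis_countableBasis X).exists_subset_of_mem_open (hgL rfl) isOpen_interior
      have hVL' : closure V ⊆ L := closure_minimal (hVL.trans interior_subset) hLcl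
      exact mem_biUnion ⟨⟨hVB, hLc.of_isClosed_subset isClosed_closure hVL'⟩, hVL'.trans hLU⟩ hgV
    obtain ⟨T, hTsub, hTf, hKT⟩ := hK.elim_finite_subcover_image
      (fun V hV => isOpen_of_mem_countableBasis hV.1.1) hcover
    exact ⟨_, ⟨T, ⟨hTf, fun V hV => (hTsub hV).1⟩, rfl⟩,
      hKT.trans (biUnion_mono subset_rfl fun V _ => subset_closure),
      iUnion₂_subset fun V hV => (hTsub hV).2⟩

theorem secondCountableTopology_induced_fellTopology {Y : Type*} (f : Y → Set X)
    (hf : ∀ y, IsClosed (f y)) : @SecondCountableTopology Y ((fellTopology X).induced f) := by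
  obtain ⟨𝒦, h𝒦c, h𝒦K, h𝒦⟩ := exists_countable_isCompact_between (X := X)
  set meets : Set X → Set (Set X) := fun U => {A | (A ∩ U).Nonempty}
  set avoids : Set X → Set (Set X) := fun K => {A | A ∩ K = ∅}
  set B := meets '' countableBasis X ∪ avoids '' 𝒦
  refine @SecondCountableTopology.mk _ ((fellTopology X).induced f) ⟨preimage f '' B,
    (((countable_countableBasis X).image _).union (h𝒦c.image _)).image _, ?_⟩
  rw [fellTopology, induced_generateFrom_eq]
  refine le_antisymm (generateFrom_anti (image_mono ?_)) (le_generateFrom ?_)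
  · rintro _ (⟨V, hV, rfl⟩ | ⟨L, hL, rfl⟩)
    · exact Or.inr ⟨V, isOpen_of_mem_countableBasis hV, rfl⟩
    · exact Or.inl ⟨L, h𝒦K L hL, rfl⟩
  · rintro _ ⟨_, ⟨K, hK, rfl⟩ | ⟨U, hU, rfl⟩, rfl⟩
    · have : f ⁻¹' avoids K = ⋃ L ∈ {L ∈ 𝒦 | K ⊆ L}, f ⁻¹' avoids L := by
        ext y
        simp only [avoids, mem_preimage, mem_ofPred_eq, mem_iUnion, exists_prop,
          ← disjoint_iff_inter_eq_empty, ← subset_compl_iff_disjoint_left]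
        refine ⟨fun hKy => ?_, fun ⟨L, ⟨_, hKL⟩, hLy⟩ => hKL.trans hLy⟩
        obtain ⟨L, hL, hKL, hLy⟩ := h𝒦 hK (hf y).isOpen_compl hKy
        exact ⟨L, ⟨hL, hKL⟩, hLy⟩
      rw [this]
      exact @isOpen_biUnion _ _ (generateFrom _) _ _ fun L hL =>
        isOpen_generateFrom_of_mem ⟨avoids L, Or.inr ⟨L, hL.1, rfl⟩, rfl⟩
    · have : f ⁻¹' meets U = ⋃ V ∈ {V ∈ countableBasis X | V ⊆ U}, f ⁻¹' meets V := by
        ext y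
        simp only [meets, mem_preimage, mem_ofPred_eq, mem_iUnion, exists_prop]
        refine ⟨fun ⟨g, hgy, hgU⟩ => ?_, fun ⟨V, ⟨_, hVU⟩, hyV⟩ =>
          hyV.mono (inter_subset_inter_right _ hVU)⟩
        obtain ⟨V, hV, hgV, hVU⟩ := (isBasis_countableBasis X).exists_subset_of_mem_open hgU hU
        exact ⟨V, ⟨hV, hVU⟩, g, hgy, hgV⟩
      rw [this]
      exact @isOpen_biUnion _ _ (generateFrom _) _ _ fun V hV =>
        isOpen_generateFrom_of_mem ⟨meets V, Or.inl ⟨V, hV.1, rfl⟩, rfl⟩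

end FellTopology

section Chabauty

variable {G : Type*} [Group G] [TopologicalSpace G] [IsTopologicalGroup G]
  [LocallyCompactSpace G] [SecondCountableTopology G]

instance SubG.secondCountableTopology : SecondCountableTopology (SubG G) :=
  secondCountableTopology_induced_fellTopology _ fun H => H.2

theorem measurable_subG_of_measurableSet_inter_nonempty {α : Type*} [MeasurableSpace α]
    {f : α → SubG G}
    (hf : ∀ K, IsCompact K → MeasurableSet {a | (((f a).1 : Set G) ∩ K).Nonempty}) :
    Measurable f := by
  obtain ⟨𝒦, h𝒦c, h𝒦K, h𝒦⟩ := exists_countable_isCompact_between (X := G)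
  rw [show SubG.measurableSpace G = _ from
    borel_eq_generateFrom_of_subbasis induced_generateFrom_eq]
  refine measurable_generateFrom ?_
  rintro _ ⟨_, ⟨K, hK, rfl⟩ | ⟨U, hU, rfl⟩, rfl⟩
  · convert (hf K hK).compl using 1
    ext a
    simp [not_nonempty_iff_eq_empty]
  · have : f ⁻¹' ((fun H : SubG G => ((H.1 : Subgroup G) : Set G)) ⁻¹' {A | (A ∩ U).Nonempty})
        = ⋃ L ∈ {L ∈ 𝒦 | L ⊆ U}, {a | (((f a).1 : Set G) ∩ L).Nonempty} := by
      ext a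
      simp only [mem_preimage, mem_ofPred_eq, mem_iUnion, exists_prop]
      refine ⟨fun ⟨g, hga, hgU⟩ => ?_, fun ⟨L, ⟨_, hLU⟩, haL⟩ =>
        haL.mono (inter_subset_inter_right _ hLU)⟩
      obtain ⟨L, hL, hgL, hLU⟩ :=
        h𝒦 isCompact_singleton hU (singleton_subset_iff.2 hgU)
      exact ⟨L, ⟨hL, hLU⟩, g, hga, hgL rfl⟩
    rw [this]
    exact .biUnion (h𝒦c.mono (sep_subset _ _)) fun L hL => hf L (h𝒦K L hL.1)

end Chabauty

theorem measurableSet_setOf_exists_mem_eq_zero {α G : Type*} [MeasurableSpace α]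
    [TopologicalSpace G] [SecondCountableTopology G] {φ : α → G → ℝ≥0∞}
    (hmeas : ∀ k, Measurable (φ · k)) (hcont : ∀ a, Continuous (φ a)) {K : Set G}
    (hK : IsCompact K) : MeasurableSet {a | ∃ k ∈ K, φ a k = 0} := by
  obtain ⟨D, hDc, hDd⟩ := exists_countable_dense K
  set D' : Set G := (↑) '' D
  have hKD : K ⊆ closure D' := fun k hk =>
    image_closure_subset_closure_image continuous_subtype_val
      ⟨⟨k, hk⟩, hDd.closure_eq ▸ mem_univ _, rfl⟩
  have : {a | ∃ k ∈ K, φ a k = 0} = {a | ⨅ d ∈ D', φ a d = 0} := by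
    ext a
    refine ⟨fun ⟨k, hkK, hk⟩ => ?_, fun h => ?_⟩
    · have hclosed : IsClosed {k | ⨅ d ∈ D', φ a d ≤ φ a k} :=
        isClosed_le continuous_const (hcont a)
      have hDsub : D' ⊆ {k | ⨅ d ∈ D', φ a d ≤ φ a k} := fun d hd => biInf_le (φ a) hd
      exact nonpos_iff_eq_zero.1 (hk ▸ closure_minimal hDsub hclosed (hKD hkK))
    · have hD' : D'.Nonempty := by
        by_contra hD'
        simp [not_nonempty_iff_eq_empty.1 hD'] at h
      obtain ⟨k, hkK, hmin⟩ :=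
        hK.exists_isMinOn (hD'.mono (Subtype.coe_image_subset _ _)) (hcont a).continuousOn
      exact ⟨k, hkK, nonpos_iff_eq_zero.1 (h ▸ le_iInf₂ fun d hd =>
        hmin (Subtype.coe_image_subset _ _ hd))⟩
  rw [this]
  exact Measurable.biInf D' (hDc.image _) (fun d _ => hmeas d) (measurableSet_singleton 0)

section Translation

variable {G E : Type*} [Group G] [TopologicalSpace G] [IsTopologicalGroup G]
  [MeasurableSpace G] [NormedAddCommGroup E] {ν : Measure G}

theorem tendsto_setLIntegral_enorm_comp_mul_right_sub_of_continuous
    [IsFiniteMeasureOnCompacts ν] {g : G → E} (hg : Continuous g) {C : Set G}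
    (hC : IsCompact C) : Tendsto (fun s => ∫⁻ h in C, ‖g (h * s) - g h‖ₑ ∂ν) (𝓝 1) (𝓝 0) := by
  refine ENNReal.tendsto_nhds_zero.2 fun ε hε => ?_
  have hη : 0 < ε / ν C := ENNReal.div_pos hε.ne' hC.measure_lt_top.ne
  have hsmall : ∀ᶠ s in 𝓝 (1 : G), ∀ h ∈ C, ‖g (h * s) - g h‖ₑ < ε / ν C := by
    refine hC.eventually_forall_of_forall_eventually fun h _ => ?_
    have hcont : Continuous fun z : G × G => ‖g (z.2 * z.1) - g z.2‖ₑ := by fun_prop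
    exact (hcont.tendsto (1, h)).eventually (gt_mem_nhds (by simpa using hη))
  filter_upwards [hsmall] with s hs
  calc ∫⁻ h in C, ‖g (h * s) - g h‖ₑ ∂ν ≤ ∫⁻ _ in C, ε / ν C ∂ν :=
        setLIntegral_mono measurable_const fun h hh => (hs h hh).le
    _ = ε / ν C * ν C := setLIntegral_const C _
    _ ≤ ε := ENNReal.mul_le_of_le_div le_rfl

variable [BorelSpace G] [ν.IsMulRightInvariant]

theorem setLIntegral_comp_mul_right_le (f : G → ℝ≥0∞) {C D : Set G} {s : G}
    (hCD : ∀ c ∈ C, c * s ∈ D) : ∫⁻ h in C, f (h * s) ∂ν ≤ ∫⁻ h in D, f h ∂ν := calc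
  _ = ∫⁻ h in (· * s) '' C, f h ∂ν :=
    (measurePreserving_mul_right ν s).setLIntegral_comp_emb (measurableEmbedding_mulRight s) _ _
  _ ≤ ∫⁻ h in D, f h ∂ν := lintegral_mono_set (by rintro _ ⟨c, hc, rfl⟩; exact hCD c hc)

theorem MeasureTheory.LocallyIntegrable.comp_mul_right {F : G → E} (hF : LocallyIntegrable F ν)
    (a : G) : LocallyIntegrable (fun h => F (h * a)) ν := by
  have := locallyIntegrable_map_homeomorph (Homeomorph.mulRight a) (μ := ν) (f := F)
  rw [Homeomorph.coe_mulRight, map_mul_right_eq_self] at this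
  exact this.1 hF

variable [LocallyCompactSpace G] [NormalSpace G] [ν.Regular] [NormedSpace ℝ E]

theorem tendsto_setLIntegral_enorm_comp_mul_right_sub {F : G → E} (hF : LocallyIntegrable F ν)
    {C : Set G} (hC : IsCompact C) :
    Tendsto (fun s => ∫⁻ h in C, ‖F (h * s) - F h‖ₑ ∂ν) (𝓝 1) (𝓝 0) := by
  obtain ⟨U, hU, hU1⟩ := exists_compact_mem_nhds (1 : G)
  have hCU : IsCompact (C * U) := hC.mul hU
  have : (ν.restrict (C * U)).Regular :=
    Measure.Regular.restrict_of_measure_ne_top hCU.measure_lt_top.ne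
  refine ENNReal.tendsto_nhds_zero.2 fun ε hε => ?_
  have hε3 : ε / 3 ≠ 0 := by simp [hε.ne']
  obtain ⟨g, hgc, hFg, hg, -⟩ :=
    (hF.integrableOn_isCompact hCU).exists_hasCompactSupport_lintegral_sub_le hε3
  filter_upwards [hU1, ENNReal.tendsto_nhds_zero.1
    (tendsto_setLIntegral_enorm_comp_mul_right_sub_of_continuous (ν := ν) hg hC) _
    (pos_iff_ne_zero.2 hε3)] with s hs hgs
  have hshift : ∫⁻ h in C, ‖F (h * s) - g (h * s)‖ₑ ∂ν ≤ ε / 3 :=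
    (setLIntegral_comp_mul_right_le (fun h => ‖F h - g h‖ₑ) fun c hc =>
      mul_mem_mul hc hs).trans hFg
  have hback : ∫⁻ h in C, ‖g h - F h‖ₑ ∂ν ≤ ε / 3 := calc
    _ ≤ ∫⁻ h in C * U, ‖g h - F h‖ₑ ∂ν :=
      lintegral_mono_set fun h hh => by simpa using mul_mem_mul hh (mem_of_mem_nhds hU1)
    _ = ∫⁻ h in C * U, ‖F h - g h‖ₑ ∂ν := by simp_rw [enorm_sub_rev]
    _ ≤ ε / 3 := hFg
  have hFC : AEStronglyMeasurable F (ν.restrict C) :=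
    (hF.integrableOn_isCompact hC).aestronglyMeasurable
  calc ∫⁻ h in C, ‖F (h * s) - F h‖ₑ ∂ν
      ≤ ∫⁻ h in C, (‖F (h * s) - g (h * s)‖ₑ + ‖g (h * s) - g h‖ₑ + ‖g h - F h‖ₑ) ∂ν :=
        lintegral_mono fun h => by
          simpa only [← edist_eq_enorm_sub] using edist_triangle4 _ _ _ _
    _ = ∫⁻ h in C, ‖F (h * s) - g (h * s)‖ₑ ∂ν + ∫⁻ h in C, ‖g (h * s) - g h‖ₑ ∂ν
          + ∫⁻ h in C, ‖g h - F h‖ₑ ∂ν := by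
        have hmid : Continuous fun h => ‖g (h * s) - g h‖ₑ := by fun_prop
        have hlast : AEMeasurable (fun h => ‖g h - F h‖ₑ) (ν.restrict C) :=
          ((hg.stronglyMeasurable_of_hasCompactSupport hgc).aestronglyMeasurable.sub hFC).enorm
        rw [lintegral_add_right' _ hlast, lintegral_add_right' _ hmid.measurable.aemeasurable]
    _ ≤ ε / 3 + ε / 3 + ε / 3 := add_le_add_three hshift hgs hback
    _ = ε := ENNReal.add_thirds ε

theorem continuous_setLIntegral_enorm_comp_mul_right_sub {F : G → E}
    (hF : LocallyIntegrable F ν) {C : Set G} (hC : IsCompact C) :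
    Continuous fun k => ∫⁻ h in C, ‖F (h * k) - F h‖ₑ ∂ν := by
  refine continuous_iff_continuousAt.2 fun a => ?_
  set Φ := fun k => ∫⁻ h in C, ‖F (h * k) - F h‖ₑ ∂ν
  set T := fun k => ∫⁻ h in C, ‖F (h * k) - F (h * a)‖ₑ ∂ν
  have hT : Tendsto T (𝓝 a) (𝓝 0) := by
    have h1 : Tendsto (fun k => a⁻¹ * k) (𝓝 a) (𝓝 1) := by
      simpa using (continuous_const_mul a⁻¹).tendsto a
    refine ((tendsto_setLIntegral_enorm_comp_mul_right_sub hF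
      (hC.image (continuous_mul_const a))).comp h1).congr fun k => ?_
    have := (measurePreserving_mul_right ν a).setLIntegral_comp_emb
      (measurableEmbedding_mulRight a) (fun y => ‖F (y * (a⁻¹ * k)) - F y‖ₑ) C
    simpa [T, mul_assoc] using this.symm
  have hmeas : ∀ b, AEMeasurable (fun h => ‖F (h * b) - F h‖ₑ) (ν.restrict C) := fun b =>
    (((hF.comp_mul_right b).integrableOn_isCompact hC).aestronglyMeasurable.sub
      (hF.integrableOn_isCompact hC).aestronglyMeasurable).enorm
  have h₁ : ∀ k, Φ k ≤ Φ a + T k := fun k => calc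
    Φ k ≤ ∫⁻ h in C, (‖F (h * a) - F h‖ₑ + ‖F (h * k) - F (h * a)‖ₑ) ∂ν :=
        lintegral_mono fun h => by
          simpa only [← edist_eq_enorm_sub, add_comm] using
            edist_triangle (F (h * k)) (F (h * a)) (F h)
    _ = Φ a + T k := lintegral_add_left' (hmeas a) _
  have h₂ : ∀ k, Φ a - T k ≤ Φ k := fun k => tsub_le_iff_right.2 <| calc
    Φ a ≤ ∫⁻ h in C, (‖F (h * k) - F h‖ₑ + ‖F (h * k) - F (h * a)‖ₑ) ∂ν :=
        lintegral_mono fun h => by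
          simpa only [← edist_eq_enorm_sub, add_comm, edist_comm (F (h * k))] using
            edist_triangle (F (h * a)) (F (h * k)) (F h)
    _ = Φ k + T k := lintegral_add_left' (hmeas k) _
  refine tendsto_of_tendsto_of_tendsto_of_le_of_le ?_ ?_ h₂ h₁
  · simpa using ENNReal.Tendsto.sub tendsto_const_nhds hT (Or.inr ENNReal.zero_ne_top)
  · simpa using tendsto_const_nhds.add hT

end Translation

section Displacement

variable {G X : Type*} [Group G] [MeasurableSpace G] [MeasurableSpace X] [MulAction G X]

def displacement (ν : Measure G) (C : Set G) (q : X → ℝ) (x : X) (k : G) : ℝ≥0∞ :=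
  ∫⁻ h in C, ‖q ((h * k) • x) - q (h • x)‖ₑ ∂ν

variable {ν : Measure G} {C : Set G} {q : X → ℝ}

theorem measurable_displacement [MeasurableMul G] [MeasurableSMul₂ G X] [SFinite ν]
    (hq : Measurable q) (k : G) : Measurable fun x => displacement ν C q x k := by
  have hF : Measurable fun p : X × G => q (p.2 • p.1) :=
    hq.comp (measurable_smul.comp measurable_swap)
  exact ((hF.comp (measurable_fst.prodMk (measurable_snd.mul_const k))).sub
    hF).enorm.lintegral_prod_right'

theorem displacement_eq_zero_iff [MeasurableMul G] [MeasurableSMul G X] (hq : Measurable q)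
    (hq_inj : Function.Injective q) (hC : ν C ≠ 0) {x : X} {k : G} :
    displacement ν C q x k = 0 ↔ k • x = x := by
  refine ⟨fun h0 => ?_, fun hk => by simp [displacement, mul_smul, hk]⟩
  by_contra hk
  have hne : ∀ h : G, ‖q ((h * k) • x) - q (h • x)‖ₑ ≠ 0 := fun h heq => hk <|
    smul_left_cancel h (by simpa [mul_smul] using hq_inj (sub_eq_zero.1 (enorm_eq_zero.1 heq)))
  have hmeas : Measurable fun h : G => ‖q ((h * k) • x) - q (h • x)‖ₑ :=
    ((hq.comp ((measurable_smul_const x).comp (measurable_mul_const k))).sub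
      (hq.comp (measurable_smul_const x))).enorm
  rw [displacement, lintegral_eq_zero_iff hmeas] at h0
  exact hC (Measure.restrict_eq_zero.1 (ae_eq_bot.1 (eventually_false_iff_eq_bot.1
    (h0.mono fun h hh => hne h hh))))

theorem continuous_displacement [TopologicalSpace G] [IsTopologicalGroup G] [BorelSpace G]
    [LocallyCompactSpace G] [NormalSpace G] [MeasurableSMul G X] [ν.IsMulRightInvariant]
    [ν.Regular] (hq : Measurable q) {M : ℝ} (hqM : ∀ y, ‖q y‖ ≤ M) (hC : IsCompact C) (x : X) :
    Continuous (displacement ν C q x) := by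
  have hloc : LocallyIntegrable (fun h : G => q (h • x)) ν :=
    (locallyIntegrable_const M).mono (hq.comp (measurable_smul_const x)).aestronglyMeasurable
      (ae_of_all _ fun h => (hqM _).trans (Real.le_norm_self M))
  exact continuous_setLIntegral_enorm_comp_mul_right_sub hloc hC

end Displacement

/-- **Closedness and measurability of stabilizers.**
Let `G` be a locally compact second countable group acting measurably on a standard Borel
space `X`.  Then every stabilizer `G_x` is a closed subgroup of `G`, and the stabilizer
map `x ↦ G_x` into the Chabauty space of closed subgroups is Borel measurable. -/
theorem stabilizer_isClosed_and_measurable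
    {G : Type*} [Group G] [TopologicalSpace G] [IsTopologicalGroup G]
    [LocallyCompactSpace G] [SecondCountableTopology G]
    [MeasurableSpace G] [BorelSpace G]
    {X : Type*} [MeasurableSpace X] [StandardBorelSpace X]
    [MulAction G X] (hact : Measurable fun p : G × X => p.1 • p.2) :
    ∃ hcl : ∀ x : X, IsClosed ((MulAction.stabilizer G x : Subgroup G) : Set G),
      Measurable fun x : X => (⟨MulAction.stabilizer G x, hcl x⟩ : SubG G) := by
  have : MeasurableSMul₂ G X := ⟨hact⟩
  obtain ⟨e, he⟩ := exists_measurableEmbedding_real (α := X)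
  set q : X → ℝ := fun y => Real.arctan (e y)
  have hq : Measurable q := Real.continuous_arctan.measurable.comp he.measurable
  have hq_inj : Function.Injective q := Real.arctan_injective.comp he.injective
  have hqM : ∀ y, ‖q y‖ ≤ Real.pi / 2 := fun y => abs_le.2
    ⟨(Real.neg_pi_div_two_lt_arctan _).le, (Real.arctan_lt_pi_div_two _).le⟩
  set ν : Measure G := (Measure.haar : Measure G).inv
  obtain ⟨C, hC, hC1⟩ := exists_compact_mem_nhds (1 : G)
  have hCν : ν C ≠ 0 := (Measure.measure_pos_of_mem_nhds ν hC1).ne'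
  have hstab : ∀ x, (MulAction.stabilizer G x : Set G) = {k | displacement ν C q x k = 0} :=
    fun x => by ext k; exact (displacement_eq_zero_iff hq hq_inj hCν).symm
  refine ⟨fun x => hstab x ▸ isClosed_eq (continuous_displacement hq hqM hC x) continuous_const,
    measurable_subG_of_measurableSet_inter_nonempty fun K hK => ?_⟩
  convert measurableSet_setOf_exists_mem_eq_zero (measurable_displacement (ν := ν) hq)
    (continuous_displacement hq hqM hC) hK using 3 with x
  simp [hstab, inter_nonempty, and_comm]
end
end

section
/- Let G be a locally compact second countable group with left Haar measure ℓ, and let H be a closed subgroup such that there is a nonzero left-H-invariant σ-finite measure η on H (Haar measure of H viewed in G). Suppose ℓ disintegrates over the quotient map p : G → H\G with factor measure ν̂ and fiber measures η̂_{Hg} supported on the cosets Hg. Then for ν̂-almost every coset Hg, the fiber measure η̂_{Hg} is invariant under left multiplication by every element of H. -/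
/-!
Left multiplication by `h ∈ H` fixes every coset `Hg` and preserves `ℓ`, so pushing every fiber
measure forward by `h` yields a second disintegration of `ℓ` with the same factor measure. By
uniqueness of disintegrations, `η̂_{Hg}` is then `h`-invariant for `ν̂`-almost every `Hg`.
Almost every fiber is finite on compacts (as `ℓ` is), hence outer regular, so on the second
countable group `G` it is determined by its values on countably many open sets; thus a single
null set of cosets serves a whole countable dense subset of `H`. Invariance extends to all of `H`
because the stabilizer of a Radon measure `μ` is closed, being cut out by the continuous
functions `g ↦ ∫ f (g x) dμ`, `f ∈ C_c(G)`.
-/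

open MeasureTheory Measure Set TopologicalSpace
open scoped ENNReal

namespace MeasureTheory.Measure

theorem ext_of_measure_sUnion_eq_of_isTopologicalBasis {X : Type*} [TopologicalSpace X]
    [MeasurableSpace X] {B : Set (Set X)} (hB : IsTopologicalBasis B) (hBc : B.Countable)
    {μ μ' : Measure X} [μ.OuterRegular] [μ'.OuterRegular]
    (h : ∀ T ⊆ B, T.Finite → μ (⋃₀ T) = μ' (⋃₀ T)) : μ = μ' := by
  refine OuterRegular.ext_isOpen fun U hU => ?_
  set C := {s ∈ B | s ⊆ U}
  let ι := {T : Set (Set X) // T.Finite ∧ T ⊆ C}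
  have : Countable ι := (countable_ofPred_finite_subset (hBc.mono (sep_subset _ _))).to_subtype
  have hC : ⋃₀ C = ⋃ T : ι, ⋃₀ T.1 := by
    refine (iUnion_subset fun T => sUnion_mono T.2.2).antisymm' ?_
    rintro x ⟨s, hs, hx⟩
    exact mem_iUnion.2
      ⟨⟨{s}, finite_singleton s, singleton_subset_iff.2 hs⟩, by simpa using hx⟩
  have hdir : Directed (· ⊆ ·) fun T : ι => ⋃₀ T.1 := fun T T' =>
    ⟨⟨T.1 ∪ T'.1, T.2.1.union T'.2.1, union_subset T.2.2 T'.2.2⟩,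
      sUnion_mono subset_union_left, sUnion_mono subset_union_right⟩
  rw [hB.open_eq_sUnion' hU, hC, hdir.measure_iUnion, hdir.measure_iUnion]
  exact iSup_congr fun T => h T.1 (T.2.2.trans (sep_subset _ _)) T.2.1

theorem ext_of_forall_integral_eq_of_hasCompactSupport {X : Type*} [TopologicalSpace X]
    [MeasurableSpace X] [BorelSpace X] [LocallyCompactSpace X] [RegularSpace X]
    {μ μ' : Measure X} [μ.Regular] [μ'.Regular]
    (h : ∀ f : X → ℝ, Continuous f → HasCompactSupport f → ∫ x, f x ∂μ = ∫ x, f x ∂μ') :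
    μ = μ' := by
  refine OuterRegular.ext_isOpen fun U hU =>
    InnerRegularWRT.eq_of_innerRegularWRT_of_forall_eq Regular.innerRegular
      Regular.innerRegular (fun K hK => ?_) hU
  rw [hK.measure_eq_biInf_integral_hasCompactSupport μ,
    hK.measure_eq_biInf_integral_hasCompactSupport μ']
  simp +contextual only [h]

section Disintegration

variable {X Y : Type*} [MeasurableSpace X] [MeasurableSpace Y] {p : X → Y} {ν : Measure Y}
  {η η' : Y → Measure X}

theorem map_bind {Z : Type*} [MeasurableSpace Z] {f : X → Z} (hf : Measurable f)
    (hη : Measurable η) : (ν.bind η).map f = ν.bind fun y => (η y).map f := by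
  have hηf : Measurable fun y => (η y).map f := (measurable_map f hf).comp hη
  ext s hs
  rw [map_apply hf hs, bind_apply (hf hs) hη.aemeasurable, bind_apply hs hηf.aemeasurable]
  exact lintegral_congr fun y => (map_apply hf hs).symm

theorem bind_apply_inter_preimage (hp : Measurable p) (hη : Measurable η)
    (hsupp : ∀ y, η y {x | p x ≠ y} = 0) {s : Set X} (hs : MeasurableSet s) {B : Set Y}
    (hB : MeasurableSet B) : ν.bind η (s ∩ p ⁻¹' B) = ∫⁻ y in B, η y s ∂ν := by
  rw [bind_apply (hs.inter (hp hB)) hη.aemeasurable, ← lintegral_indicator hB]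
  refine lintegral_congr fun y => ?_
  by_cases hyB : y ∈ B
  · rw [indicator_of_mem hyB]
    refine measure_congr (ae_eq_set.2 ⟨by simp [sdiff_eq_empty.2 inter_subset_left], ?_⟩)
    exact measure_mono_null
      (fun x hx (hxy : p x = y) => hx.2 ⟨hx.1, show p x ∈ B from hxy ▸ hyB⟩) (hsupp y)
  · rw [indicator_of_notMem hyB]
    exact measure_mono_null (fun x hx (hxy : p x = y) => hyB (hxy ▸ hx.2)) (hsupp y)

theorem ae_apply_eq_of_bind_eq [SigmaFinite ν] (hp : Measurable p) (hη : Measurable η)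
    (hη' : Measurable η') (hsupp : ∀ y, η y {x | p x ≠ y} = 0)
    (hsupp' : ∀ y, η' y {x | p x ≠ y} = 0) (h : ν.bind η = ν.bind η') {s : Set X}
    (hs : MeasurableSet s) : ∀ᵐ y ∂ν, η y s = η' y s :=
  ae_eq_of_forall_setLIntegral_eq_of_sigmaFinite ((measurable_coe hs).comp hη)
    ((measurable_coe hs).comp hη') fun B hB _ => by
      rw [← bind_apply_inter_preimage hp hη hsupp hs hB,
        ← bind_apply_inter_preimage hp hη' hsupp' hs hB, h]

variable [TopologicalSpace X]

theorem ae_eq_of_forall_isOpen_ae_apply_eq [SecondCountableTopology X]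
    {μ μ' : Y → Measure X}
    (hreg : ∀ᵐ y ∂ν, (μ y).OuterRegular ∧ (μ' y).OuterRegular)
    (h : ∀ s, IsOpen s → ∀ᵐ y ∂ν, μ y s = μ' y s) : μ =ᵐ[ν] μ' := by
  obtain ⟨B, hBc, -, hB⟩ := exists_countable_basis X
  have hfin : ∀ᵐ y ∂ν, ∀ T ∈ {T | T.Finite ∧ T ⊆ B}, μ y (⋃₀ T) = μ' y (⋃₀ T) :=
    (ae_ball_iff (countable_ofPred_finite_subset hBc)).2 fun T hT =>
      h _ (isOpen_sUnion fun s hs => hB.isOpen (hT.2 hs))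
  filter_upwards [hreg, hfin] with y ⟨_, _⟩ hy
  exact ext_of_measure_sUnion_eq_of_isTopologicalBasis hB hBc
    fun T hT hTf => hy T ⟨hTf, hT⟩

theorem ae_eq_of_bind_eq [OpensMeasurableSpace X] [SecondCountableTopology X]
    [SigmaFinite ν] (hp : Measurable p) (hη : Measurable η) (hη' : Measurable η')
    (hsupp : ∀ y, η y {x | p x ≠ y} = 0) (hsupp' : ∀ y, η' y {x | p x ≠ y} = 0)
    (hreg : ∀ᵐ y ∂ν, (η y).OuterRegular ∧ (η' y).OuterRegular) (h : ν.bind η = ν.bind η') :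
    η =ᵐ[ν] η' :=
  ae_eq_of_forall_isOpen_ae_apply_eq hreg fun _ hs =>
    ae_apply_eq_of_bind_eq hp hη hη' hsupp hsupp' h hs.measurableSet

theorem ae_isFiniteMeasureOnCompacts_of_bind [OpensMeasurableSpace X]
    [WeaklyLocallyCompactSpace X] [SigmaCompactSpace X] [R1Space X] (hη : Measurable η)
    [IsFiniteMeasureOnCompacts (ν.bind η)] : ∀ᵐ y ∂ν, IsFiniteMeasureOnCompacts (η y) := by
  let K := CompactExhaustion.choice X
  have hK : ∀ n, ∀ᵐ y ∂ν, η y (closure (K n)) < ∞ := fun n => by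
    refine ae_lt_top ((measurable_coe isClosed_closure.measurableSet).comp hη) ?_
    rw [← bind_apply isClosed_closure.measurableSet hη.aemeasurable]
    exact (K.isCompact n).closure.measure_lt_top.ne
  filter_upwards [ae_all_iff.2 hK] with y hy
  refine ⟨fun k hk => ?_⟩
  obtain ⟨n, hn⟩ := K.exists_superset_of_isCompact hk
  exact (measure_mono (hn.trans subset_closure)).trans_lt (hy n)

end Disintegration

section Group

variable {G : Type*} [Group G] [TopologicalSpace G] [IsTopologicalGroup G] [LocallyCompactSpace G]
  [MeasurableSpace G] [BorelSpace G]

theorem continuous_integral_comp_mul_left {E : Type*} [NormedAddCommGroup E] [NormedSpace ℝ E]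
    {μ : Measure G} [IsFiniteMeasureOnCompacts μ] {f : G → E} (hf : Continuous f)
    (hfc : HasCompactSupport f) : Continuous fun g => ∫ x, f (g * x) ∂μ := by
  simpa [Function.comp_def] using (continuous_integral_apply_inv_mul (μ := μ)
    (hf.comp continuous_inv) (hfc.comp_homeomorph (Homeomorph.inv G))).comp continuous_inv

theorem isClosed_setOf_map_mul_left_eq (μ : Measure G) [μ.Regular] :
    IsClosed {g : G | μ.map (g * ·) = μ} := by
  have hmap : ∀ g : G, ∀ f : G → ℝ, Continuous f →
      ∫ x, f x ∂μ.map (g * ·) = ∫ x, f (g * x) ∂μ := fun g f hf =>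
    integral_map (measurable_const_mul g).aemeasurable hf.aestronglyMeasurable
  have hset : {g : G | μ.map (g * ·) = μ} = ⋂ (f : G → ℝ) (_ : Continuous f)
      (_ : HasCompactSupport f), {g | ∫ x, f (g * x) ∂μ = ∫ x, f x ∂μ} := by
    ext g
    simp only [mem_ofPred_eq, mem_iInter]
    refine ⟨fun hg f hf _ => by rw [← hmap g f hf, hg], fun hg => ?_⟩
    have : (μ.map (g * ·)).Regular := Regular.map (Homeomorph.mulLeft g)
    exact ext_of_forall_integral_eq_of_hasCompactSupport fun f hf hfc =>
      (hmap g f hf).trans (hg f hf hfc)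
  rw [hset]
  exact isClosed_iInter fun f => isClosed_iInter fun hf => isClosed_iInter fun hfc =>
    isClosed_eq (continuous_integral_comp_mul_left hf hfc) continuous_const

end Group

end MeasureTheory.Measure

theorem disintegration_fibers_ae_left_H_invariant_general
    {G : Type*} [Group G] [TopologicalSpace G] [IsTopologicalGroup G]
    [LocallyCompactSpace G] [SecondCountableTopology G]
    [MeasurableSpace G] [BorelSpace G]
    (H : Subgroup G)
    (ℓ : Measure G) [ℓ.IsHaarMeasure]
    (ν : Measure (Quotient (QuotientGroup.rightRel H))) [SigmaFinite ν]
    (η : Quotient (QuotientGroup.rightRel H) → Measure G)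
    (hη : Measurable η)
    (hsupp : ∀ q, η q {x : G | Quotient.mk (QuotientGroup.rightRel H) x ≠ q} = 0)
    (hdis : ℓ = ν.bind η) :
    ∀ᵐ q ∂ν, ∀ h ∈ H, Measure.map (fun x : G => h * x) (η q) = η q := by
  set p := Quotient.mk (QuotientGroup.rightRel H)
  have hp : Measurable p := measurable_quotient_mk''
  have hsupp_map : ∀ h ∈ H, ∀ q, (η q).map (h * ·) {x | p x ≠ q} = 0 := fun h hh q => by
    have hfix : ∀ x, p (h * x) = p x := fun x =>
      Quotient.sound (QuotientGroup.rightRel_apply.2 (by simpa using inv_mem hh))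
    rw [← MeasurableEquiv.coe_mulLeft, MeasurableEquiv.map_apply]
    simpa [hfix] using hsupp q
  have hloc : ∀ᵐ q ∂ν, IsFiniteMeasureOnCompacts (η q) := by
    have : IsFiniteMeasureOnCompacts (ν.bind η) := hdis ▸ inferInstance
    exact ae_isFiniteMeasureOnCompacts_of_bind hη
  obtain ⟨D, hDH, hDc, hHD⟩ :=
    (IsSeparable.of_separableSpace (H : Set G)).exists_countable_dense_subset
  have hD : ∀ᵐ q ∂ν, ∀ d ∈ D, (η q).map (d * ·) = η q := by
    refine (ae_ball_iff hDc).2 fun d hd => ae_eq_of_bind_eq hp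
      ((measurable_map _ (measurable_const_mul d)).comp hη) hη (hsupp_map d (hDH hd)) hsupp ?_ ?_
    · filter_upwards [hloc] with q _
      have : ((η q).map (d * ·)).Regular := Regular.map (Homeomorph.mulLeft d)
      exact ⟨inferInstance, inferInstance⟩
    · rw [← map_bind (measurable_const_mul d) hη, ← hdis, map_mul_left_eq_self]
  filter_upwards [hloc, hD] with q _ hqD
  exact fun h hh => (isClosed_setOf_map_mul_left_eq (η q)).closure_subset_iff.2 hqD (hHD hh)

/-- **Fiber measures of a disintegration of Haar measure are a.e. `H`-invariant.**
Let `G` be a locally compact second countable group, `H` a closed subgroup, and `ℓ` a left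
Haar measure on `G`.  Suppose `ℓ` disintegrates over the quotient map `G → H\G` (the space
of right cosets) with σ-finite factor measure `ν` and σ-finite fiber measures `η q`
supported on the corresponding cosets.  Then for `ν`-almost every coset `q`, the fiber
measure `η q` is invariant under left multiplication by every element of `H`. -/
theorem disintegration_fibers_ae_left_H_invariant
    {G : Type*} [Group G] [TopologicalSpace G] [IsTopologicalGroup G]
    [LocallyCompactSpace G] [SecondCountableTopology G]
    [MeasurableSpace G] [BorelSpace G]
    (H : Subgroup G) (hH : IsClosed (H : Set G))
    (ℓ : Measure G) [ℓ.IsHaarMeasure]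
    (ν : Measure (Quotient (QuotientGroup.rightRel H))) [SigmaFinite ν]
    (η : Quotient (QuotientGroup.rightRel H) → Measure G)
    (hη : Measurable η) (hsf : ∀ q, SigmaFinite (η q))
    (hsupp : ∀ q, η q {x : G | Quotient.mk (QuotientGroup.rightRel H) x ≠ q} = 0)
    (hdis : ℓ = ν.bind η) :
    ∀ᵐ q ∂ν, ∀ h ∈ H, Measure.map (fun x : G => h * x) (η q) = η q :=
  disintegration_fibers_ae_left_H_invariant_general H ℓ ν η hη hsupp hdis
end
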